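/- arXiv:2110.02485 — 2 statements merged into one kernel-verified Lean document; each statement's English description precedes it below -/
import Mathlib

section
/- If Q ∈ R^{ℓ×ℓ×n} satisfies Q^T * Q = I (t-product orthogonality), then for every A ∈ R^{ℓ×m×n}, ‖Q*A‖_F = ‖A‖_F, where ‖·‖_F is the Frobenius norm of the tensor (square root of sum of squares of all entries). -/
open scoped BigOperators
open Finset

noncomputable section

/-- Circular convolution of tubes in ℝ^n. -/
def conv {n : ℕ} [NeZero n] (a b : ZMod n → ℝ) : ZMod n → ℝ :=
  fun i => ∑ j : ZMod n, a j * b (i - j)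

/-- Circular convolution of tubes in ℂ^n. -/
def convC {n : ℕ} [NeZero n] (a b : ZMod n → ℂ) : ZMod n → ℂ :=
  fun i => ∑ j : ZMod n, a j * b (i - j)

/-- Unnormalized discrete Fourier transform with ω = exp(-2πi/n). -/
def dft {n : ℕ} [NeZero n] (a : ZMod n → ℂ) : ZMod n → ℂ :=
  fun k => ∑ j : ZMod n,
    a j * Complex.exp (-(2 * (Real.pi : ℂ) * Complex.I * (j.val : ℂ) * (k.val : ℂ)) / (n : ℂ))

/-- The t-product of third order tensors. -/
def tmul {n ℓ p m : ℕ} [NeZero n] (A : Fin ℓ → Fin p → ZMod n → ℝ)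
    (B : Fin p → Fin m → ZMod n → ℝ) : Fin ℓ → Fin m → ZMod n → ℝ :=
  fun i j t => ∑ k : Fin p, conv (A i k) (B k j) t

/-- Tensor transpose: transpose each frontal slice and reverse the order of slices 2..n. -/
def tT {n ℓ m : ℕ} (A : Fin ℓ → Fin m → ZMod n → ℝ) : Fin m → Fin ℓ → ZMod n → ℝ :=
  fun j i k => A i j (-k)

/-- Identity tensor: first frontal slice is the identity matrix, others are zero. -/
def tId (n m : ℕ) : Fin m → Fin m → ZMod n → ℝ :=
  fun i j k => if i = j ∧ k = 0 then 1 else 0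

/-- Frobenius norm of a real third order tensor. -/
def frob {n ℓ m : ℕ} [NeZero n] (A : Fin ℓ → Fin m → ZMod n → ℝ) : ℝ :=
  Real.sqrt (∑ i : Fin ℓ, ∑ j : Fin m, ∑ k : ZMod n, (A i j k) ^ 2)

/-- Frobenius norm of a complex third order tensor. -/
def frobC {n ℓ m : ℕ} [NeZero n] (A : Fin ℓ → Fin m → ZMod n → ℂ) : ℝ :=
  Real.sqrt (∑ i : Fin ℓ, ∑ j : Fin m, ∑ k : ZMod n, ‖A i j k‖ ^ 2)

/-- The k-th frontal slice of the mode-3 DFT of a real third order tensor. -/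
def hatSlice {n ℓ m : ℕ} [NeZero n] (A : Fin ℓ → Fin m → ZMod n → ℝ) (k : ZMod n) :
    Matrix (Fin ℓ) (Fin m) ℂ :=
  Matrix.of fun i j => dft (fun t => (A i j t : ℂ)) k

/-- Tubal rank: the maximum of the ranks of the frontal slices of the mode-3 DFT. -/
def trank {n ℓ m : ℕ} [NeZero n] (A : Fin ℓ → Fin m → ZMod n → ℝ) : ℕ :=
  Finset.univ.sup fun k : ZMod n => (hatSlice A k).rank

end

/-!
Write `⟨X, Y⟩` for the Frobenius inner product. Reversing a tube is the adjoint of circular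
convolution, so the tensor transpose is the adjoint of left t-multiplication; with associativity
of the t-product this gives
`‖Q * A‖² = ⟨Q * A, Q * A⟩ = ⟨A, Qᵀ * (Q * A)⟩ = ⟨A, (Qᵀ * Q) * A⟩ = ⟨A, A⟩ = ‖A‖²`.
-/

section Convolution

variable {n : ℕ} [NeZero n]

theorem conv_assoc (a b c : ZMod n → ℝ) : conv (conv a b) c = conv a (conv b c) := by
  funext t
  simp only [conv, Finset.sum_mul, Finset.mul_sum]
  rw [Finset.sum_comm]
  refine Finset.sum_congr rfl fun s _ => ?_
  refine (Fintype.sum_equiv (Equiv.addRight s) _ _ fun u => ?_).symm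
  simp only [Equiv.coe_addRight, add_sub_cancel_right, sub_add_eq_sub_sub_swap]
  ring

theorem conv_sum_left {ι : Type*} (s : Finset ι) (f : ι → ZMod n → ℝ) (b : ZMod n → ℝ) :
    conv (∑ i ∈ s, f i) b = ∑ i ∈ s, conv (f i) b := by
  funext t
  simp only [conv, Finset.sum_apply, Finset.sum_mul]
  exact Finset.sum_comm

theorem conv_sum_right {ι : Type*} (s : Finset ι) (a : ZMod n → ℝ) (g : ι → ZMod n → ℝ) :
    conv a (∑ i ∈ s, g i) = ∑ i ∈ s, conv a (g i) := by
  funext t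
  simp only [conv, Finset.sum_apply, Finset.mul_sum]
  exact Finset.sum_comm

theorem sum_conv_mul (a b c : ZMod n → ℝ) :
    ∑ t, conv a b t * c t = ∑ t, b t * conv (fun s => a (-s)) c t := by
  calc ∑ t, conv a b t * c t = ∑ s, ∑ u, a s * b u * c (u + s) := by
        simp only [conv, Finset.sum_mul]
        rw [Finset.sum_comm]
        refine Finset.sum_congr rfl fun s _ => ?_
        exact (Fintype.sum_equiv (Equiv.addRight s) _ _ fun u => by simp).symm
    _ = ∑ u, b u * conv (fun s => a (-s)) c u := by
        simp only [conv, Finset.mul_sum]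
        rw [Finset.sum_comm]
        refine Finset.sum_congr rfl fun u _ => ?_
        refine Fintype.sum_equiv (Equiv.neg _) _ _ fun s => ?_
        simp only [Equiv.neg_apply, neg_neg, sub_neg_eq_add]
        ring

end Convolution

section Tensor

variable {n ℓ p q m : ℕ} [NeZero n]

def frobInner (A B : Fin ℓ → Fin m → ZMod n → ℝ) : ℝ :=
  ∑ i, ∑ j, ∑ k, A i j k * B i j k

theorem frob_eq_sqrt_frobInner (A : Fin ℓ → Fin m → ZMod n → ℝ) :
    frob A = √(frobInner A A) := by
  simp only [frob, frobInner, sq]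

theorem tmul_apply (A : Fin ℓ → Fin p → ZMod n → ℝ) (B : Fin p → Fin m → ZMod n → ℝ)
    (i : Fin ℓ) (j : Fin m) : tmul A B i j = ∑ k, conv (A i k) (B k j) := by
  funext t
  simp only [tmul, Finset.sum_apply]

theorem conv_tId (i k : Fin ℓ) (b : ZMod n → ℝ) :
    conv (tId n ℓ i k) b = if i = k then b else 0 := by
  funext t
  by_cases h : i = k <;> simp [conv, tId, h]

theorem tmul_assoc (A : Fin ℓ → Fin p → ZMod n → ℝ) (B : Fin p → Fin q → ZMod n → ℝ)
    (C : Fin q → Fin m → ZMod n → ℝ) : tmul (tmul A B) C = tmul A (tmul B C) := by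
  funext i j
  simp only [tmul_apply, conv_sum_left, conv_sum_right, conv_assoc]
  exact Finset.sum_comm

theorem tId_tmul (A : Fin ℓ → Fin m → ZMod n → ℝ) : tmul (tId n ℓ) A = A := by
  funext i j
  simp [tmul_apply, conv_tId]

theorem frobInner_tmul_left (Q : Fin ℓ → Fin p → ZMod n → ℝ) (A : Fin p → Fin m → ZMod n → ℝ)
    (B : Fin ℓ → Fin m → ZMod n → ℝ) :
    frobInner (tmul Q A) B = frobInner A (tmul (tT Q) B) := by
  calc frobInner (tmul Q A) B = ∑ i, ∑ k, ∑ j, ∑ t, conv (Q i k) (A k j) t * B i j t := by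
        simp only [frobInner, tmul, Finset.sum_mul]
        exact Finset.sum_congr rfl fun i _ =>
          (Finset.sum_congr rfl fun j _ => Finset.sum_comm).trans Finset.sum_comm
    _ = ∑ i, ∑ k, ∑ j, ∑ t, A k j t * conv (tT Q k i) (B i j) t := by
        simp only [sum_conv_mul]
        rfl
    _ = frobInner A (tmul (tT Q) B) := by
        simp only [frobInner, tmul, Finset.mul_sum]
        exact Finset.sum_comm.trans (Finset.sum_congr rfl fun k _ =>
          Finset.sum_comm.trans (Finset.sum_congr rfl fun j _ => Finset.sum_comm))

end Tensor

/-- t-product multiplication by an orthogonal tensor preserves the Frobenius norm. -/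
theorem frob_tmul_orthogonal {n l m : ℕ} [NeZero n]
    (Q : Fin l → Fin l → ZMod n → ℝ) (A : Fin l → Fin m → ZMod n → ℝ)
    (hQ : tmul (tT Q) Q = tId n l) :
    frob (tmul Q A) = frob A := by
  have h : frobInner (tmul Q A) (tmul Q A) = frobInner A A := by
    rw [frobInner_tmul_left, ← tmul_assoc, hQ, tId_tmul]
  rw [frob_eq_sqrt_frobInner, frob_eq_sqrt_frobInner, h]
end

section
/- (Eckart–Young for the t-product, error formula) Let A ∈ R^{ℓ×m×n} with tSVD A = U*S*V^T and let A_k = Σ_{j=1}^k U(:,j,:) * S(j,j,:) * V(:,j,:)^T. Then ‖A − A_k‖_F² = (1/n) Σ_{i=1}^n Σ_{j=k+1}^{min(ℓ,m)} (σ̂_j^{(i)})², where σ̂_j^{(i)} is the j-th singular value of the i-th frontal slice Â^{(i)} of the mode-3 DFT of A. -/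
open scoped BigOperators
open Finset

/-!
The mode-3 DFT diagonalises the t-product: it sends `tmul` to slice-wise matrix products, `tT`
to slice-wise conjugate transposes and `tId` to identity slices, and by Parseval it multiplies
the squared Frobenius norm by `n`. Hence every DFT slice of `A - A_k` is `Û (Ŝ - Ŝ_k) V̂ᴴ` with
`Û`, `V̂` unitary, whose squared Frobenius norm is that of the tail `σ̂_k, σ̂_(k+1), …` of the
rectangular diagonal `Ŝ`.
-/

open ComplexConjugate
open scoped Matrix ZMod

section DFT

variable {n : ℕ} [NeZero n]

theorem dft_eq_zmod_dft (a : ZMod n → ℂ) : dft a = 𝓕 a := by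
  funext k
  refine Finset.sum_congr rfl fun j _ => ?_
  have hexponent : -(j * k) = ((-((j.val * k.val : ℕ) : ℤ) : ℤ) : ZMod n) := by
    push_cast; simp
  rw [hexponent, ZMod.stdAddChar_coe, smul_eq_mul, mul_comm]
  congr 2
  push_cast
  ring

theorem dft_sum {ι : Type*} (s : Finset ι) (f : ι → ZMod n → ℂ) (k : ZMod n) :
    dft (fun t => ∑ q ∈ s, f q t) k = ∑ q ∈ s, dft (f q) k := by
  simp only [dft, sum_mul]
  exact sum_comm

theorem dft_sub (f g : ZMod n → ℂ) (k : ZMod n) :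
    dft (fun t => f t - g t) k = dft f k - dft g k := by
  simp only [dft, sub_mul, sum_sub_distrib]

theorem sum_dft (Φ : ZMod n → ℂ) : ∑ k, dft Φ k = n * Φ 0 := by
  have inversion := congrFun (ZMod.dft_dft Φ) 0
  rw [ZMod.dft_apply_zero, neg_zero] at inversion
  rw [dft_eq_zmod_dft, inversion, smul_eq_mul]

theorem dft_comp_neg_ofReal (c : ZMod n → ℝ) (k : ZMod n) :
    dft (fun t => (c (-t) : ℂ)) k = conj (dft (fun t => (c t : ℂ)) k) := by
  rw [dft_eq_zmod_dft, dft_eq_zmod_dft, ZMod.dft_comp_neg (fun t => (c t : ℂ))]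
  simp only [ZMod.dft_apply, map_sum]
  refine sum_congr rfl fun j _ => ?_
  rw [smul_eq_mul, smul_eq_mul, map_mul, Complex.conj_ofReal, ← AddChar.map_neg_eq_conj, mul_neg]

theorem dft_conv (a b : ZMod n → ℝ) (k : ZMod n) :
    dft (fun t => (conv a b t : ℂ)) k
      = dft (fun t => (a t : ℂ)) k * dft (fun t => (b t : ℂ)) k := by
  simp only [dft_eq_zmod_dft, ZMod.dft_apply, smul_eq_mul]
  rw [sum_mul_sum]
  simp only [conv, Complex.ofReal_sum, Complex.ofReal_mul, mul_sum]
  conv_lhs => rw [sum_comm]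
  refine sum_congr rfl fun y _ => Fintype.sum_equiv (Equiv.subRight y) _ _ fun x => ?_
  rw [Equiv.subRight_apply, show -(x * k) = -(y * k) + -((x - y) * k) by ring,
    AddChar.map_add_eq_mul]
  ring

/-- `|â|² = â · conj â` is the DFT of the autocorrelation `a ∗ a(-·)`, and summing a DFT over all
frequencies evaluates `n` times its input at `0`. -/
theorem sum_norm_sq_dft (a : ZMod n → ℝ) :
    ∑ k, ‖dft (fun t => (a t : ℂ)) k‖ ^ 2 = n * ∑ t, a t ^ 2 := by
  have key : ∑ k, dft (fun t => (a t : ℂ)) k * conj (dft (fun t => (a t : ℂ)) k)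
      = n * ∑ t, a t ^ 2 := by
    simp_rw [← dft_comp_neg_ofReal, ← dft_conv, sum_dft, conv, zero_sub]
    push_cast
    simp [sq]
  simp_rw [Complex.mul_conj, Complex.normSq_eq_norm_sq] at key
  exact_mod_cast key

end DFT

section Slices

variable {n ℓ p m : ℕ} [NeZero n]

theorem hatSlice_sub (A B : Fin ℓ → Fin m → ZMod n → ℝ) (i : ZMod n) :
    hatSlice (A - B) i = hatSlice A i - hatSlice B i := by
  ext a b
  simp only [hatSlice, Matrix.of_apply, Matrix.sub_apply, Pi.sub_apply, Complex.ofReal_sub,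
    dft_sub]

theorem hatSlice_ite (P : Fin ℓ → Prop) [DecidablePred P] (A : Fin ℓ → Fin m → ZMod n → ℝ)
    (i : ZMod n) (a : Fin ℓ) (b : Fin m) :
    hatSlice (fun a b t => if P a then A a b t else 0) i a b
      = if P a then hatSlice A i a b else 0 := by
  by_cases h : P a <;> simp [hatSlice, h, dft]

theorem hatSlice_tmul (A : Fin ℓ → Fin p → ZMod n → ℝ) (B : Fin p → Fin m → ZMod n → ℝ)
    (i : ZMod n) : hatSlice (tmul A B) i = hatSlice A i * hatSlice B i := by
  ext a b
  simp only [hatSlice, tmul, Matrix.of_apply, Matrix.mul_apply, Complex.ofReal_sum, dft_sum,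
    dft_conv]

theorem hatSlice_tT (A : Fin ℓ → Fin m → ZMod n → ℝ) (i : ZMod n) :
    hatSlice (tT A) i = (hatSlice A i)ᴴ :=
  Matrix.ext fun b a => dft_comp_neg_ofReal (A a b) i

theorem hatSlice_tId (i : ZMod n) : hatSlice (tId n m) i = 1 := by
  ext a b
  rw [hatSlice, Matrix.of_apply, dft_eq_zmod_dft, ZMod.dft_apply, Fintype.sum_eq_single 0]
  · by_cases h : a = b <;> simp [tId, h, Matrix.one_apply]
  · intro t ht
    simp [tId, ht]

theorem conjTranspose_mul_self_hatSlice {U : Fin m → Fin m → ZMod n → ℝ}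
    (hU : tmul (tT U) U = tId n m) (i : ZMod n) : (hatSlice U i)ᴴ * hatSlice U i = 1 := by
  rw [← hatSlice_tT, ← hatSlice_tmul, hU, hatSlice_tId]

theorem frob_sq_eq_sum_hatSlice (A : Fin ℓ → Fin m → ZMod n → ℝ) :
    frob A ^ 2 = (1 / n) * ∑ i : ZMod n, ∑ a, ∑ b, ‖hatSlice A i a b‖ ^ 2 := by
  have hn : (n : ℝ) ≠ 0 := NeZero.ne _
  have swap : ∑ i : ZMod n, ∑ a, ∑ b, ‖hatSlice A i a b‖ ^ 2
      = ∑ a, ∑ b, ∑ i : ZMod n, ‖hatSlice A i a b‖ ^ 2 := by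
    rw [sum_comm]
    exact sum_congr rfl fun _ _ => sum_comm
  rw [frob, Real.sq_sqrt (by positivity), swap]
  simp_rw [hatSlice, Matrix.of_apply, sum_norm_sq_dft, ← mul_sum]
  field_simp

end Slices

section Frobenius

variable {ι κ : Type*} [Fintype ι] [Fintype κ]

theorem sum_norm_sq_eq_trace (N : Matrix ι κ ℂ) :
    ((∑ a, ∑ b, ‖N a b‖ ^ 2 : ℝ) : ℂ) = (Nᴴ * N).trace := by
  simp only [Matrix.trace, Matrix.diag_apply, Matrix.mul_apply, Matrix.conjTranspose_apply,
    Complex.ofReal_sum, Complex.ofReal_pow, ← Complex.mul_conj', RCLike.star_def]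
  rw [sum_comm]
  simp only [mul_comm]

theorem sum_norm_sq_mul_mul_of_unitary [DecidableEq ι] [DecidableEq κ] (P : Matrix ι ι ℂ)
    (M : Matrix ι κ ℂ) (Q : Matrix κ κ ℂ) (hP : Pᴴ * P = 1) (hQ : Q * Qᴴ = 1) :
    ∑ a, ∑ b, ‖(P * M * Q) a b‖ ^ 2 = ∑ a, ∑ b, ‖M a b‖ ^ 2 := by
  have htrace : ((P * M * Q)ᴴ * (P * M * Q)).trace = (Mᴴ * M).trace := by
    calc ((P * M * Q)ᴴ * (P * M * Q)).trace = (Qᴴ * (Mᴴ * M) * Q).trace := by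
          simp only [Matrix.conjTranspose_mul, Matrix.mul_assoc]
          rw [← Matrix.mul_assoc Pᴴ P, hP, Matrix.one_mul]
      _ = (Q * Qᴴ * (Mᴴ * M)).trace := by rw [Matrix.trace_mul_comm, Matrix.mul_assoc]
      _ = (Mᴴ * M).trace := by rw [hQ, Matrix.one_mul]
  exact_mod_cast (sum_norm_sq_eq_trace _).trans (htrace.trans (sum_norm_sq_eq_trace M).symm)

end Frobenius

theorem sum_norm_sq_truncated_rectDiag (σ : ℕ → ℝ) (k l m : ℕ) :
    ∑ a : Fin l, ∑ b : Fin m, ‖if k ≤ (a : ℕ) ∧ (a : ℕ) = b then (σ a : ℂ) else 0‖ ^ 2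
      = ∑ j ∈ Ico k (min l m), σ j ^ 2 := by
  have hnorm : ∀ (P : Prop) [Decidable P] (x : ℝ),
      ‖if P then (x : ℂ) else 0‖ ^ 2 = if P then x ^ 2 else 0 := by
    intro P _ x
    split_ifs <;> simp [Complex.norm_real, sq_abs]
  have hrow : ∀ a : ℕ, ∑ b : Fin m, (if k ≤ a ∧ a = b then σ a ^ 2 else 0)
      = if a ∈ Ico k m then σ a ^ 2 else 0 := by
    intro a
    rw [Fin.sum_univ_eq_sum_range (fun b => if k ≤ a ∧ a = b then σ a ^ 2 else 0) m]
    by_cases hk : k ≤ a <;> simp [hk]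
  have hrange : range l ∩ Ico k m = Ico k (min l m) := by
    ext j
    simp only [mem_inter, mem_range, mem_Ico]
    omega
  simp_rw [hnorm, hrow]
  rw [Fin.sum_univ_eq_sum_range (fun a => if a ∈ Ico k m then σ a ^ 2 else 0), sum_ite_mem, hrange]

theorem tsvd_truncation_error_general {l m n : ℕ} [NeZero n] (k : ℕ)
    (A : Fin l → Fin m → ZMod n → ℝ)
    (U : Fin l → Fin l → ZMod n → ℝ) (S : Fin l → Fin m → ZMod n → ℝ)
    (V : Fin m → Fin m → ZMod n → ℝ) (σ : ZMod n → ℕ → ℝ)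
    (hA : A = tmul (tmul U S) (tT V))
    (hU1 : tmul (tT U) U = tId n l)
    (hV1 : tmul (tT V) V = tId n m)
    (hS : ∀ (i : ZMod n) (a : Fin l) (b : Fin m),
      hatSlice S i a b = if (a : ℕ) = (b : ℕ) then (σ i (a : ℕ) : ℂ) else 0) :
    frob (fun i j t => A i j t -
        tmul (tmul U (fun a b t => if (a : ℕ) < k then S a b t else 0)) (tT V) i j t) ^ 2
      = (1 / n) * ∑ i : ZMod n, ∑ j ∈ Finset.Ico k (min l m), σ i j ^ 2 := by
  set Sk : Fin l → Fin m → ZMod n → ℝ := fun a b t => if (a : ℕ) < k then S a b t else 0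
  have hslice : ∀ i, hatSlice (A - tmul (tmul U Sk) (tT V)) i
      = hatSlice U i * (hatSlice S i - hatSlice Sk i) * (hatSlice V i)ᴴ := by
    intro i
    rw [hatSlice_sub, hA]
    simp only [hatSlice_tmul, hatSlice_tT, ← Matrix.sub_mul, ← Matrix.mul_sub]
  have htail : ∀ i a b, (hatSlice S i - hatSlice Sk i) a b
      = if k ≤ (a : ℕ) ∧ (a : ℕ) = b then (σ i a : ℂ) else 0 := by
    intro i a b
    rw [Matrix.sub_apply, hatSlice_ite, hS]
    by_cases hak : (a : ℕ) < k
    · simp [hak]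
    · simp [hak, not_lt.mp hak]
  change frob (A - tmul (tmul U Sk) (tT V)) ^ 2 = _
  rw [frob_sq_eq_sum_hatSlice]
  congr 1
  refine sum_congr rfl fun i _ => ?_
  rw [hslice, sum_norm_sq_mul_mul_of_unitary _ _ _ (conjTranspose_mul_self_hatSlice hU1 i)
    (by rw [Matrix.conjTranspose_conjTranspose]; exact conjTranspose_mul_self_hatSlice hV1 i)]
  simp_rw [htail]
  exact sum_norm_sq_truncated_rectDiag (σ i) k l m

/-- Eckart–Young error formula for the truncated tSVD:
‖A − A_k‖_F² = (1/n) Σ_i Σ_{j=k+1}^{min(ℓ,m)} (σ̂_j^{(i)})². -/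
theorem tsvd_truncation_error {l m n : ℕ} [NeZero n] (k : ℕ)
    (A : Fin l → Fin m → ZMod n → ℝ)
    (U : Fin l → Fin l → ZMod n → ℝ) (S : Fin l → Fin m → ZMod n → ℝ)
    (V : Fin m → Fin m → ZMod n → ℝ) (σ : ZMod n → ℕ → ℝ)
    (hA : A = tmul (tmul U S) (tT V))
    (hU1 : tmul (tT U) U = tId n l) (hU2 : tmul U (tT U) = tId n l)
    (hV1 : tmul (tT V) V = tId n m) (hV2 : tmul V (tT V) = tId n m)
    (hS : ∀ (i : ZMod n) (a : Fin l) (b : Fin m),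
      hatSlice S i a b = if (a : ℕ) = (b : ℕ) then (σ i (a : ℕ) : ℂ) else 0)
    (hσnonneg : ∀ i j, 0 ≤ σ i j)
    (hσmono : ∀ i, ∀ j j' : ℕ, j ≤ j' → σ i j' ≤ σ i j) :
    frob (fun i j t => A i j t -
        tmul (tmul U (fun a b t => if (a : ℕ) < k then S a b t else 0)) (tT V) i j t) ^ 2
      = (1 / n) * ∑ i : ZMod n, ∑ j ∈ Finset.Ico k (min l m), σ i j ^ 2 :=
  tsvd_truncation_error_general k A U S V σ hA hU1 hV1 hS
end
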